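/- arXiv:2511.14325 — 11 statements merged into one kernel-verified Lean document; each statement's English description precedes it below -/
import Mathlib

section
/- Let A be a ring (not necessarily commutative) equipped with a ℤ-grading 𝒜 (a GradedRing structure), and let ε be a unit of A lying in the degree-zero component 𝒜 0 such that for all integers m, n and all elements r ∈ 𝒜 m, s ∈ 𝒜 n one has r * s = ε^(m*n) * (s * r) (integer powers of the unit ε). If there exists a unit u of A with u ∈ 𝒜 d for some integer d, then ε^(d*d) = 1. In particular: if d is odd and ε * ε = 1 then ε = 1; and if d is odd and ε = −1 (the Koszul/Dirac sign rule) then (2 : A) = 0. -/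
/-- Lemma 2.5, `sta:odd-period`.
Let `A` be a (not necessarily commutative) ring with a `ℤ`-grading `𝒜`, and let `ε`
be a unit of `A` lying in `𝒜 0` such that `r * s = ε ^ (m * n) * (s * r)` for all
homogeneous `r ∈ 𝒜 m`, `s ∈ 𝒜 n`.  If `u` is a unit of `A` with `u ∈ 𝒜 d`, then
`ε ^ (d * d) = 1`; in particular, if `d` is odd and `ε * ε = 1` then `ε = 1`, and
if `d` is odd and `ε = -1` then `(2 : A) = 0`. -/
theorem period_odd_forces_trivial_sign
    (A : Type*) [Ring A] (𝒜 : ℤ → AddSubgroup A) [GradedRing 𝒜]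
    (ε : Aˣ) (hε0 : (ε : A) ∈ 𝒜 0)
    (hcomm : ∀ (m n : ℤ) (r s : A), r ∈ 𝒜 m → s ∈ 𝒜 n →
      r * s = ((ε ^ (m * n) : Aˣ) : A) * (s * r))
    (d : ℤ) (u : Aˣ) (hu : (u : A) ∈ 𝒜 d) :
    ε ^ (d * d) = 1 ∧
      (Odd d → ε * ε = 1 → ε = 1) ∧
      (Odd d → (ε : A) = -1 → (2 : A) = 0) := by
  have key : ε ^ (d * d) = 1 := by
    have h := hcomm d d (u : A) (u : A) hu hu
    have h3 : (ε ^ (d * d) : Aˣ) * (u * u) = 1 * (u * u) :=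
      Units.ext (by simp only [Units.val_mul, Units.val_one, one_mul]; exact h.symm)
    exact mul_right_cancel h3
  have step : Odd d → ε * ε = 1 → ε = 1 := by
    intro hd h1
    obtain ⟨k, hk⟩ := hd.mul hd
    have hε2 : ε ^ (2 : ℤ) = 1 := by rw [zpow_two]; exact h1
    have heq : ε ^ (d * d) = ε := by
      rw [hk, zpow_add, zpow_one, zpow_mul, hε2, one_zpow, one_mul]
    rw [heq] at key; exact key
  refine ⟨key, step, ?_⟩
  intro hd hneg
  have h1 : ε * ε = 1 := Units.ext (by
    rw [Units.val_mul, hneg, Units.val_one, neg_one_mul, neg_neg])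
  have heps := step hd h1
  have hx : (-1 : A) = 1 := by rw [← hneg, heps, Units.val_one]
  have h2 : (-1 : A) + 1 = 1 + 1 := by rw [hx]
  rw [neg_add_cancel] at h2
  rw [← one_add_one_eq_two, ← h2]
end

section
/- Let A be a commutative ring equipped with a ℤ-grading 𝒜 (GradedRing 𝒜) such that the zero ideal is the only homogeneous prime ideal of A (i.e., A is a graded field). Then the degree-zero subring 𝒜 0 is a field, and either (i) 𝒜 n = 0 for every n ≠ 0, or (ii) there exist an integer d > 0 and a unit t of A with t ∈ 𝒜 d such that 𝒜 n = 0 whenever d does not divide n, and for every integer k multiplication by t^k is a bijection from 𝒜 0 onto 𝒜 (k·d) (so A = 𝒜 0[t^{±1}]). In case (i) the period of A is 0, and in case (ii) it is d. -/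
/-- The period of a `ℤ`-graded commutative ring: the least `d > 0` such that there is a
unit of `A` lying in `𝒜 d`, and `0` if no such `d` exists. -/
noncomputable def gradedPeriod {A : Type*} [CommRing A]
    (𝒜 : ℤ → Submodule ℤ A) : ℕ :=
  sInf {d : ℕ | 0 < d ∧ ∃ u : Aˣ, (u : A) ∈ 𝒜 (d : ℤ)}

section Aux

variable {A : Type*} [CommRing A] (𝒜 : ℤ → Submodule ℤ A) [GradedRing 𝒜]

/-- In a graded field, every nonzero homogeneous element is a unit. -/
theorem aux_isUnit
    (hfield : ∀ p : Ideal A, (p.IsPrime ∧ Ideal.IsHomogeneous 𝒜 p) ↔ p = ⊥)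
    {n : ℤ} {a : A} (ha : a ∈ 𝒜 n) (ha0 : a ≠ 0) : IsUnit a := by
  have hspan : (Ideal.span {a}).IsHomogeneous 𝒜 :=
    Ideal.homogeneous_span 𝒜 {a} (by rintro x rfl; exact ⟨n, ha⟩)
  have hrad := hspan.radical_eq
  have hempty : {J : Ideal A | Ideal.IsHomogeneous 𝒜 J ∧ Ideal.span {a} ≤ J ∧ J.IsPrime} = ∅ := by
    ext J
    simp only [Set.mem_setOf_eq, Set.mem_empty_iff_false, iff_false]
    rintro ⟨hJh, hJle, hJp⟩
    have : J = ⊥ := (hfield J).mp ⟨hJp, hJh⟩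
    subst this
    exact ha0 (by simpa using hJle (Ideal.mem_span_singleton_self a))
  rw [hempty, sInf_empty] at hrad
  have : Ideal.span {a} = ⊤ := by
    rw [← Ideal.radical_eq_top]; exact hrad
  rwa [Ideal.span_singleton_eq_top] at this

/-- The inverse of a unit of degree `d` has degree `-d`. -/
theorem aux_inv_mem {u : Aˣ} {d : ℤ} (hu : (u : A) ∈ 𝒜 d) :
    ((u⁻¹ : Aˣ) : A) ∈ 𝒜 (-d) := by
  classical
  set b : A := ((u⁻¹ : Aˣ) : A) with hb
  have hsum : ∑ i ∈ (DirectSum.decompose 𝒜 b).support,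
      ((DirectSum.decompose 𝒜 b i : 𝒜 i) : A) = b := DirectSum.sum_support_decompose 𝒜 b
  have h1 : (1 : A) = ∑ i ∈ (DirectSum.decompose 𝒜 b).support,
      (u : A) * ((DirectSum.decompose 𝒜 b i : 𝒜 i) : A) := by
    rw [← Finset.mul_sum, hsum]; simp [hb]
  have h2 := congrArg (GradedRing.proj 𝒜 0) h1
  rw [map_sum] at h2
  have hone : GradedRing.proj 𝒜 0 (1 : A) = 1 := by
    rw [GradedRing.proj_apply]
    exact DirectSum.decompose_of_mem_same 𝒜 (SetLike.one_mem_graded 𝒜)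
  have hterm : ∀ i ∈ (DirectSum.decompose 𝒜 b).support,
      GradedRing.proj 𝒜 0 ((u : A) * ((DirectSum.decompose 𝒜 b i : 𝒜 i) : A))
      = if i = -d then (u : A) * ((DirectSum.decompose 𝒜 b i : 𝒜 i) : A) else 0 := by
    intro i _
    have hmem : (u : A) * ((DirectSum.decompose 𝒜 b i : 𝒜 i) : A) ∈ 𝒜 (d + i) :=
      SetLike.mul_mem_graded hu (DirectSum.decompose 𝒜 b i).2
    by_cases hi : i = -d
    · subst hi
      rw [if_pos rfl, GradedRing.proj_apply]
      exact DirectSum.decompose_of_mem_same 𝒜 (by rwa [add_neg_cancel] at hmem)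
    · rw [if_neg hi, GradedRing.proj_apply]
      exact DirectSum.decompose_of_mem_ne 𝒜 hmem (by omega)
  rw [hone, Finset.sum_congr rfl hterm, Finset.sum_ite_eq' _ (-d)] at h2
  by_cases hd : -d ∈ (DirectSum.decompose 𝒜 b).support
  · rw [if_pos hd] at h2
    have heq : ((DirectSum.decompose 𝒜 b (-d) : 𝒜 (-d)) : A) = b := by
      calc ((DirectSum.decompose 𝒜 b (-d) : 𝒜 (-d)) : A)
          = b * ((u : A) * ((DirectSum.decompose 𝒜 b (-d) : 𝒜 (-d)) : A)) := by
            rw [← mul_assoc, hb]; simp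
        _ = b := by rw [← h2, mul_one]
    rw [← heq]; exact (DirectSum.decompose 𝒜 b (-d)).2
  · rw [if_neg hd] at h2
    have hb0 : b = 0 := by rw [← mul_one b, h2, mul_zero]
    rw [hb0]; exact zero_mem _

/-- Integer powers of a unit of degree `d` have degree `k * d`. -/
theorem aux_zpow_mem {t : Aˣ} {d : ℤ} (ht : (t : A) ∈ 𝒜 d) (k : ℤ) :
    ((t ^ k : Aˣ) : A) ∈ 𝒜 (k * d) := by
  obtain ⟨m, rfl | rfl⟩ := Int.eq_nat_or_neg k
  · rw [zpow_natCast, Units.val_pow_eq_pow_val]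
    have := SetLike.pow_mem_graded m ht
    rwa [nsmul_eq_mul] at this
  · rw [zpow_neg, zpow_natCast]
    have hpow : ((t ^ m : Aˣ) : A) ∈ 𝒜 ((m : ℤ) * d) := by
      rw [Units.val_pow_eq_pow_val]
      have := SetLike.pow_mem_graded m ht
      rwa [nsmul_eq_mul] at this
    rw [neg_mul]
    exact aux_inv_mem 𝒜 hpow

end Aux

/-- graded-field classification, Example 2.7. If the zero ideal is the
only homogeneous prime ideal of the `ℤ`-graded commutative ring `A`, then `𝒜 0` is a
field and either (i) all nonzero graded pieces vanish (and the period is `0`), or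
(ii) there are `d > 0` and a unit `t ∈ 𝒜 d` such that `𝒜 n = 0` unless `d ∣ n` and
multiplication by `t ^ k` is a bijection from `𝒜 0` onto `𝒜 (k * d)` for every `k : ℤ`
(so `A = 𝒜 0 [t^{±1}]`, and the period is `d`). -/
theorem graded_field_classification
    (A : Type*) [CommRing A] (𝒜 : ℤ → Submodule ℤ A) [GradedRing 𝒜]
    (hfield : ∀ p : Ideal A, (p.IsPrime ∧ Ideal.IsHomogeneous 𝒜 p) ↔ p = ⊥) :
    IsField (𝒜 0) ∧
      ((∀ n : ℤ, n ≠ 0 → 𝒜 n = ⊥) ∧ gradedPeriod 𝒜 = 0 ∨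
        ∃ d : ℕ, 0 < d ∧ gradedPeriod 𝒜 = d ∧
          ∃ t : Aˣ, (t : A) ∈ 𝒜 (d : ℤ) ∧
            (∀ n : ℤ, ¬ ((d : ℤ) ∣ n) → 𝒜 n = ⊥) ∧
            ∀ k : ℤ,
              (∀ a ∈ 𝒜 0, ((t ^ k : Aˣ) : A) * a ∈ 𝒜 (k * d)) ∧
              (∀ x ∈ 𝒜 (k * d), ∃! a : A, a ∈ 𝒜 0 ∧ ((t ^ k : Aˣ) : A) * a = x)) := by
  -- `⊥` is prime, so `A` is a domain.
  have hbot : (⊥ : Ideal A).IsPrime ∧ Ideal.IsHomogeneous 𝒜 ⊥ := (hfield ⊥).mpr rfl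
  haveI : (⊥ : Ideal A).IsPrime := hbot.1
  haveI : Nontrivial A := by
    rcases subsingleton_or_nontrivial A with h | h
    · exact absurd (Subsingleton.elim (⊥ : Ideal A) ⊤) hbot.1.ne_top
    · exact h
  haveI : NoZeroDivisors A := by
    constructor
    intro a b hab
    have := hbot.1.mem_or_mem (show a * b ∈ (⊥ : Ideal A) by simpa using hab)
    simpa using this
  haveI : IsDomain A := NoZeroDivisors.to_isDomain A
  have hunit : ∀ {n : ℤ} {a : A}, a ∈ 𝒜 n → a ≠ 0 → IsUnit a :=
    fun h h0 => aux_isUnit 𝒜 hfield h h0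
  constructor
  · -- `𝒜 0` is a field
    refine ⟨⟨1, 0, ?_⟩, mul_comm, ?_⟩
    · intro h
      have : ((1 : 𝒜 0) : A) = ((0 : 𝒜 0) : A) := congrArg _ h
      simp at this
    · intro a ha
      have ha0 : (a : A) ≠ 0 := by
        intro h; exact ha (Subtype.ext (by simpa using h))
      obtain ⟨u, hu⟩ := hunit a.2 ha0
      have hinv : ((u⁻¹ : Aˣ) : A) ∈ 𝒜 (0 : ℤ) := by
        have := aux_inv_mem 𝒜 (hu ▸ a.2 : (u : A) ∈ 𝒜 (0:ℤ))
        simpa using this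
      refine ⟨⟨((u⁻¹ : Aˣ) : A), hinv⟩, ?_⟩
      apply Subtype.ext
      push_cast [SetLike.GradeZero.coe_mul]
      simp [← hu]
  · -- the dichotomy
    set S : Set ℕ := {d : ℕ | 0 < d ∧ ∃ u : Aˣ, (u : A) ∈ 𝒜 (d : ℤ)} with hS
    by_cases hSe : S = ∅
    · left
      constructor
      · intro n hn
        by_contra h
        obtain ⟨x, hx, hx0⟩ := Submodule.exists_mem_ne_zero_of_ne_bot h
        obtain ⟨u, hu⟩ := hunit hx hx0
        rcases lt_or_gt_of_ne hn with hneg | hpos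
        · have hinv : ((u⁻¹ : Aˣ) : A) ∈ 𝒜 (-n) := aux_inv_mem 𝒜 (hu ▸ hx)
          have : (-n).toNat ∈ S := by
            refine ⟨by omega, u⁻¹, ?_⟩
            have : ((-n).toNat : ℤ) = -n := by omega
            rwa [this]
          rw [hSe] at this; exact this
        · have : n.toNat ∈ S := by
            refine ⟨by omega, u, ?_⟩
            have : (n.toNat : ℤ) = n := by omega
            rwa [this, hu]
          rw [hSe] at this; exact this
      · rw [gradedPeriod, show {d : ℕ | 0 < d ∧ ∃ u : Aˣ, (u : A) ∈ 𝒜 (d : ℤ)} = S from rfl,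
          hSe, Nat.sInf_empty]
    · right
      have hSne : S.Nonempty := Set.nonempty_iff_ne_empty.mpr hSe
      have hdmem : sInf S ∈ S := Nat.sInf_mem hSne
      obtain ⟨hdpos, t, ht⟩ := hdmem
      set d : ℕ := sInf S with hd
      refine ⟨d, hdpos, rfl, t, ht, ?_, ?_⟩
      · -- vanishing off multiples of d
        intro n hn
        by_contra h
        obtain ⟨x, hx, hx0⟩ := Submodule.exists_mem_ne_zero_of_ne_bot h
        obtain ⟨u, hu⟩ := hunit hx hx0
        set q : ℤ := n / d with hq
        set r : ℤ := n % d with hr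
        have hrlt : r < d := Int.emod_lt_of_pos n (by exact_mod_cast hdpos)
        have hrpos : 0 < r := by
          have h0 : 0 ≤ r := Int.emod_nonneg n (by exact_mod_cast hdpos.ne')
          rcases h0.lt_or_eq with h | h
          · exact h
          · exact absurd (Int.dvd_of_emod_eq_zero h.symm) hn
        have hnq : n = d * q + r := (Int.mul_ediv_add_emod n d).symm
        have hmem : ((u * t ^ (-q) : Aˣ) : A) ∈ 𝒜 r := by
          have h1 : ((t ^ (-q) : Aˣ) : A) ∈ 𝒜 ((-q) * d) := aux_zpow_mem 𝒜 ht (-q)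
          have := SetLike.mul_mem_graded (hu ▸ hx : ((u : A)) ∈ 𝒜 n) h1
          rw [show n + (-q) * (d:ℤ) = r by rw [hnq]; ring] at this
          simpa using this
        have hrS : r.toNat ∈ S := by
          refine ⟨by omega, u * t ^ (-q), ?_⟩
          have : (r.toNat : ℤ) = r := by omega
          rwa [this]
        have := Nat.sInf_le hrS
        omega
      · -- bijection claims
        intro k
        constructor
        · intro a ha
          have h1 : ((t ^ k : Aˣ) : A) ∈ 𝒜 (k * d) := aux_zpow_mem 𝒜 ht k
          have := SetLike.mul_mem_graded h1 ha
          simpa using this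
        · intro x hx
          have h1 : ((t ^ k : Aˣ) : A) ∈ 𝒜 (k * d) := aux_zpow_mem 𝒜 ht k
          have h2 : (((t ^ k)⁻¹ : Aˣ) : A) ∈ 𝒜 (-(k * d)) := aux_inv_mem 𝒜 h1
          refine ⟨(((t ^ k)⁻¹ : Aˣ) : A) * x, ⟨?_, ?_⟩, ?_⟩
          · have := SetLike.mul_mem_graded h2 hx
            simpa using this
          · rw [← mul_assoc]
            simp
          · rintro b ⟨hb, rfl⟩
            rw [← mul_assoc]
            simp
end

section
/- Let A be a commutative ring equipped with a ℤ-grading 𝒜 (GradedRing 𝒜), and suppose A is periodic: there exist an integer d > 0 and a unit u of A with u ∈ 𝒜 d. Then the map sending a homogeneous prime ideal p of A to the prime ideal p ∩ 𝒜 0 of the degree-zero subring 𝒜 0 (the preimage of p under the inclusion 𝒜 0 → A) is a bijection from the set of homogeneous prime ideals of A onto the set of prime ideals of 𝒜 0; moreover this bijection and its inverse both preserve inclusions of ideals (hence it is a homeomorphism of the corresponding Zariski spectra). -/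
/-- The inclusion of the degree-zero subring `𝒜 0` into `A`, as a ring homomorphism. -/
def gradeZeroInclusion {A : Type*} [CommRing A] (𝒜 : ℤ → Submodule ℤ A)
    [GradedRing 𝒜] : (𝒜 0) →+* A where
  toFun a := (a : A)
  map_one' := rfl
  map_mul' _ _ := rfl
  map_zero' := rfl
  map_add' _ _ := rfl

/-! A unit `u ∈ 𝒜 d` with `d > 0` turns every homogeneous `x ∈ 𝒜 i` into the degree-zero
element `x ^ d * u ^ (-i)`, which lies in a radical ideal exactly when `x` does. So a homogeneous
radical ideal is determined by its degree-zero part, and the inverse map sends a prime `q` of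
`𝒜 0` to `√(q A)`: its degree-zero part is `q` because projecting to degree zero is
`𝒜 0`-linear, and it is prime because for homogeneous ideals primality may be tested on
homogeneous elements, where it reduces to the primality of `q`. -/

open DirectSum

theorem Ideal.IsRadical.pow_mul_unit_mem_iff {R : Type*} [CommSemiring R] {I : Ideal R}
    (hI : I.IsRadical) {d : ℕ} (hd : d ≠ 0) (x : R) (v : Rˣ) : x ^ d * v ∈ I ↔ x ∈ I := by
  rw [I.mul_unit_mem_iff_mem v.isUnit]
  exact ⟨fun h => hI ⟨d, h⟩, fun h => I.pow_mem_of_mem h d (Nat.pos_of_ne_zero hd)⟩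

section UnitsGraded

variable {ι σ A : Type*} [DecidableEq ι] [AddGroup ι] [Semiring A] [SetLike σ A]
  [AddSubmonoidClass σ A] {𝒜 : ι → σ} [GradedRing 𝒜] {u : Aˣ} {d : ι}

theorem Units.val_inv_mem_graded (hu : (u : A) ∈ 𝒜 d) : ((u⁻¹ : Aˣ) : A) ∈ 𝒜 (-d) := by
  have h : (u : A) * (decompose 𝒜 ((u⁻¹ : Aˣ) : A) (-d) : A) = 1 := by
    rw [← coe_decompose_mul_add_of_left_mem 𝒜 hu, Units.mul_inv, add_neg_cancel,
      decompose_of_mem_same 𝒜 SetLike.GradedOne.one_mem]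
  exact Units.inv_eq_of_mul_eq_one_right h ▸ SetLike.coe_mem _

theorem Units.val_zpow_mem_graded (hu : (u : A) ∈ 𝒜 d) :
    ∀ n : ℤ, ((u ^ n : Aˣ) : A) ∈ 𝒜 (n • d)
  | (n : ℕ) => by simpa using SetLike.pow_mem_graded n hu
  | .negSucc n => by
    rw [zpow_negSucc, ← inv_pow, negSucc_zsmul, ← neg_nsmul]
    exact SetLike.pow_mem_graded (n + 1) (Units.val_inv_mem_graded hu)

end UnitsGraded

section Periodic

variable {A : Type*} [CommRing A] {𝒜 : ℤ → Submodule ℤ A} [GradedRing 𝒜]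

theorem pow_mul_zpow_mem_zero {u : Aˣ} {d : ℕ} (hu : (u : A) ∈ 𝒜 d) {x : A} {i : ℤ}
    (hx : x ∈ 𝒜 i) : x ^ d * ((u ^ (-i) : Aˣ) : A) ∈ 𝒜 0 := by
  have := SetLike.mul_mem_graded (SetLike.pow_mem_graded d hx) (Units.val_zpow_mem_graded hu (-i))
  convert this using 2
  simp only [nsmul_eq_mul, smul_eq_mul]
  ring

theorem comap_map_gradeZeroInclusion (q : Ideal (𝒜 0)) :
    (q.map (gradeZeroInclusion 𝒜)).comap (gradeZeroInclusion 𝒜) = q := by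
  refine le_antisymm (fun a ha => ?_) Ideal.le_comap_map
  -- The degree-zero projection is only `𝒜 0`-linear, while `q.map _` is an `A`-span.
  suffices ∀ x ∈ q.map (gradeZeroInclusion 𝒜), ∀ r : A, decompose 𝒜 (r * x) 0 ∈ q by
    have := this _ ha 1
    rwa [one_mul, show gradeZeroInclusion 𝒜 a = (a : A) from rfl, decompose_coe,
      of_eq_same] at this
  intro x hx
  induction hx using Submodule.span_induction with
  | mem x hx =>
    obtain ⟨b, hb, rfl⟩ := hx
    intro r
    have : decompose 𝒜 (r * b) 0 = decompose 𝒜 r 0 * b :=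
      Subtype.ext (coe_decompose_mul_of_right_mem_zero 𝒜 b.2)
    exact this ▸ q.mul_mem_left _ hb
  | zero => simp
  | add x y _ _ hx hy => intro r; simpa [mul_add] using q.add_mem (hx r) (hy r)
  | smul s x _ hx => intro r; simpa [mul_assoc] using hx (r * s)

theorem isHomogeneous_map_gradeZeroInclusion (q : Ideal (𝒜 0)) :
    (q.map (gradeZeroInclusion 𝒜)).IsHomogeneous 𝒜 :=
  Ideal.homogeneous_span 𝒜 _ (by rintro _ ⟨a, -, rfl⟩; exact ⟨0, a.2⟩)

theorem comap_radical_map_gradeZeroInclusion {q : Ideal (𝒜 0)} (hq : q.IsPrime) :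
    (q.map (gradeZeroInclusion 𝒜)).radical.comap (gradeZeroInclusion 𝒜) = q := by
  rw [Ideal.comap_radical, comap_map_gradeZeroInclusion, hq.radical]

variable {u : Aˣ} {d : ℕ}

theorem le_of_comap_gradeZeroInclusion_le (hd : d ≠ 0) (hu : (u : A) ∈ 𝒜 d) {p p' : Ideal A}
    (hp : p.IsHomogeneous 𝒜) (hp' : p'.IsRadical)
    (h : p.comap (gradeZeroInclusion 𝒜) ≤ p'.comap (gradeZeroInclusion 𝒜)) : p ≤ p' := by
  classical
  intro a ha
  rw [← sum_support_decompose 𝒜 a]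
  refine Ideal.sum_mem _ fun i _ => ?_
  have hx₀ : (decompose 𝒜 a i : A) ^ d * ((u ^ (-i) : Aˣ) : A) ∈ p :=
    p.mul_mem_right _ (p.pow_mem_of_mem (hp i ha) d (Nat.pos_of_ne_zero hd))
  exact (hp'.pow_mul_unit_mem_iff hd _ _).1
    (h (x := ⟨_, pow_mul_zpow_mem_zero hu (decompose 𝒜 a i).2⟩) hx₀)

theorem isPrime_radical_map_gradeZeroInclusion (hd : d ≠ 0) (hu : (u : A) ∈ 𝒜 d)
    {q : Ideal (𝒜 0)} (hq : q.IsPrime) : (q.map (gradeZeroInclusion 𝒜)).radical.IsPrime := by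
  have hcomap := comap_radical_map_gradeZeroInclusion hq
  have hrad := Ideal.radical_isRadical (q.map (gradeZeroInclusion 𝒜))
  refine (isHomogeneous_map_gradeZeroInclusion q).radical.isPrime_of_homogeneous_mem_or_mem
    (fun htop => hq.ne_top ?_) ?_
  · rw [← hcomap, htop, Ideal.comap_top]
  rintro x y ⟨i, hx⟩ ⟨j, hy⟩ hxy
  let x₀ : 𝒜 0 := ⟨_, pow_mul_zpow_mem_zero hu hx⟩
  let y₀ : 𝒜 0 := ⟨_, pow_mul_zpow_mem_zero hu hy⟩
  have hxy₀ : x₀ * y₀ ∈ q := by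
    rw [← hcomap, Ideal.mem_comap]
    have : gradeZeroInclusion 𝒜 (x₀ * y₀) = (x * y) ^ d * ((u ^ (-(i + j)) : Aˣ) : A) := by
      change x ^ d * ((u ^ (-i) : Aˣ) : A) * (y ^ d * ((u ^ (-j) : Aˣ) : A)) = _
      rw [neg_add, zpow_add, Units.val_mul]
      ring
    rw [this, hrad.pow_mul_unit_mem_iff hd]
    exact hxy
  exact (hq.mem_or_mem hxy₀).imp (fun h => (hrad.pow_mul_unit_mem_iff hd _ _).1 (hcomap.ge h))
    (fun h => (hrad.pow_mul_unit_mem_iff hd _ _).1 (hcomap.ge h))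

end Periodic

/-- Remark 2.9, `rmk:spech`.  If the `ℤ`-graded commutative ring `A`
is periodic (it has a unit `u ∈ 𝒜 d` for some `d > 0`), then `p ↦ p ∩ 𝒜 0`
(the comap along the inclusion `𝒜 0 → A`) is an inclusion-preserving bijection — with
inclusion-preserving inverse — from the homogeneous prime ideals of `A` onto the prime
ideals of the degree-zero subring `𝒜 0`. -/
theorem periodic_spech_equiv_spec_grade_zero
    (A : Type*) [CommRing A] (𝒜 : ℤ → Submodule ℤ A) [GradedRing 𝒜]
    (d : ℤ) (hd : 0 < d) (u : Aˣ) (hu : (u : A) ∈ 𝒜 d) :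
    ∃ e : {p : Ideal A // p.IsPrime ∧ Ideal.IsHomogeneous 𝒜 p} ≃
        {q : Ideal (𝒜 0) // q.IsPrime},
      (∀ p : {p : Ideal A // p.IsPrime ∧ Ideal.IsHomogeneous 𝒜 p},
        (e p : Ideal (𝒜 0)) = Ideal.comap (gradeZeroInclusion 𝒜) (p : Ideal A)) ∧
      (∀ p p' : {p : Ideal A // p.IsPrime ∧ Ideal.IsHomogeneous 𝒜 p},
        (p : Ideal A) ≤ (p' : Ideal A) ↔ (e p : Ideal (𝒜 0)) ≤ (e p' : Ideal (𝒜 0))) := by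
  lift d to ℕ using hd.le
  have hd₀ : d ≠ 0 := by exact_mod_cast hd.ne'
  let e : {p : Ideal A // p.IsPrime ∧ p.IsHomogeneous 𝒜} ≃ {q : Ideal (𝒜 0) // q.IsPrime} :=
    { toFun p := ⟨p.1.comap (gradeZeroInclusion 𝒜), p.2.1.comap _⟩
      invFun q := ⟨(q.1.map (gradeZeroInclusion 𝒜)).radical,
        isPrime_radical_map_gradeZeroInclusion hd₀ hu q.2,
        (isHomogeneous_map_gradeZeroInclusion q.1).radical⟩
      left_inv p := by
        have hcomap := comap_radical_map_gradeZeroInclusion (p.2.1.comap (gradeZeroInclusion 𝒜))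
        refine Subtype.ext (le_antisymm ?_ ?_)
        · exact le_of_comap_gradeZeroInclusion_le hd₀ hu
            (isHomogeneous_map_gradeZeroInclusion _).radical p.2.1.isRadical hcomap.le
        · exact le_of_comap_gradeZeroInclusion_le hd₀ hu p.2.2 (Ideal.radical_isRadical _)
            hcomap.ge
      right_inv q := Subtype.ext (comap_radical_map_gradeZeroInclusion q.2) }
  exact ⟨e, fun p => rfl, fun p p' =>
    ⟨Ideal.comap_mono, le_of_comap_gradeZeroInclusion_le hd₀ hu p.2.2 p'.2.1.isRadical⟩⟩
end

section
/- Let A be a commutative ring equipped with a ℤ-grading 𝒜 (GradedRing 𝒜) and let p be a homogeneous prime ideal of A. Then the local period per_p(A) equals the greatest common divisor of the set of natural numbers {|n| : n ≠ 0 and there exists f ∈ 𝒜 n with f ∉ p}, with the convention that the gcd of the empty set is 0. Equivalently, the subgroup of ℤ generated by the degrees of homogeneous elements not in p is the subgroup generated by per_p(A). -/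
/-- The local period of the `ℤ`-graded commutative ring `A` at a (homogeneous prime)
ideal `p`: the least `d > 0` for which there are homogeneous elements `a ∈ 𝒜 m`,
`s ∈ 𝒜 k` with `a ∉ p`, `s ∉ p` and `m - k = d`; it is `0` if no such `d` exists. -/
noncomputable def localPeriod {A : Type*} [CommRing A]
    (𝒜 : ℤ → Submodule ℤ A) (p : Ideal A) : ℕ :=
  sInf {d : ℕ | 0 < d ∧ ∃ m k : ℤ, ∃ a ∈ 𝒜 m, ∃ s ∈ 𝒜 k,
    a ∉ p ∧ s ∉ p ∧ m - k = (d : ℤ)}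

/-- Proposition 2.13, `sta:graded-ring-local-period`.  The local period
of `A` at a homogeneous prime `p` is the gcd of the (absolute values of the) nonzero
degrees of homogeneous elements not in `p` (with `gcd ∅ = 0`); equivalently, the
subgroup of `ℤ` generated by the degrees of homogeneous elements outside `p` is the
subgroup generated by the local period. -/
theorem localPeriod_eq_gcd_of_degrees
    (A : Type*) [CommRing A] (𝒜 : ℤ → Submodule ℤ A) [GradedRing 𝒜]
    (p : Ideal A) (hp : p.IsPrime) (hhom : Ideal.IsHomogeneous 𝒜 p) :
    (∀ n : ℤ, n ≠ 0 → (∃ f ∈ 𝒜 n, f ∉ p) → ((localPeriod 𝒜 p : ℤ) ∣ n)) ∧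
    (∀ c : ℕ, (∀ n : ℤ, n ≠ 0 → (∃ f ∈ 𝒜 n, f ∉ p) → ((c : ℤ) ∣ n)) →
      c ∣ localPeriod 𝒜 p) ∧
    AddSubgroup.closure {n : ℤ | ∃ f ∈ 𝒜 n, f ∉ p} =
      AddSubgroup.zmultiples (localPeriod 𝒜 p : ℤ) := by
  set S : Set ℤ := {n : ℤ | ∃ f ∈ 𝒜 n, f ∉ p} with hSdef
  have hS0 : (0 : ℤ) ∈ S :=
    ⟨1, SetLike.one_mem_graded 𝒜, fun h => hp.ne_top ((Ideal.eq_top_iff_one p).mpr h)⟩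
  have hSadd : ∀ m ∈ S, ∀ k ∈ S, m + k ∈ S := by
    rintro m ⟨a, ha, hap⟩ k ⟨s, hs, hsp⟩
    exact ⟨a * s, SetLike.mul_mem_graded ha hs,
      fun h => ((hp.mem_or_mem h).elim hap hsp)⟩
  -- the subgroup of differences of degrees
  set T : AddSubgroup ℤ :=
    { carrier := {x : ℤ | ∃ m ∈ S, ∃ k ∈ S, m - k = x}
      zero_mem' := ⟨0, hS0, 0, hS0, by ring⟩
      add_mem' := by
        rintro x y ⟨m, hm, k, hk, rfl⟩ ⟨m', hm', k', hk', rfl⟩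
        exact ⟨m + m', hSadd _ hm _ hm', k + k', hSadd _ hk _ hk', by ring⟩
      neg_mem' := by
        rintro x ⟨m, hm, k, hk, rfl⟩
        exact ⟨k, hk, m, hm, by ring⟩ } with hTdef
  have hTmem : ∀ x : ℤ, x ∈ T ↔ ∃ m ∈ S, ∃ k ∈ S, m - k = x := fun x => Iff.rfl
  have hST : ∀ n ∈ S, n ∈ T := fun n hn => ⟨n, hn, 0, hS0, by ring⟩
  obtain ⟨g, hg⟩ := Int.subgroup_cyclic T
  have hgmem : ∀ x : ℤ, x ∈ T ↔ g ∣ x := by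
    intro x
    rw [hg, ← AddSubgroup.zmultiples_eq_closure, Int.mem_zmultiples_iff]
  -- the defining set of localPeriod
  have hset : {d : ℕ | 0 < d ∧ ∃ m k : ℤ, ∃ a ∈ 𝒜 m, ∃ s ∈ 𝒜 k,
      a ∉ p ∧ s ∉ p ∧ m - k = (d : ℤ)} = {d : ℕ | 0 < d ∧ (d : ℤ) ∈ T} := by
    ext d
    constructor
    · rintro ⟨hd, m, k, a, ha, s, hs, hap, hsp, hmk⟩
      exact ⟨hd, m, ⟨a, ha, hap⟩, k, ⟨s, hs, hsp⟩, hmk⟩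
    · rintro ⟨hd, m, ⟨a, ha, hap⟩, k, ⟨s, hs, hsp⟩, hmk⟩
      exact ⟨hd, m, k, a, ha, s, hs, hap, hsp, hmk⟩
  have hlp : localPeriod 𝒜 p = g.natAbs := by
    rw [localPeriod, hset]
    rcases eq_or_ne g 0 with rfl | hg0
    · have : {d : ℕ | 0 < d ∧ (d : ℤ) ∈ T} = ∅ := by
        ext d
        simp only [Set.mem_setOf_eq, Set.mem_empty_iff_false, iff_false, not_and]
        intro hd hdT
        have := (hgmem _).mp hdT
        simp only [zero_dvd_iff, Int.natCast_eq_zero] at this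
        omega
      rw [this, Nat.sInf_empty, Int.natAbs_zero]
    · have hmemset : g.natAbs ∈ {d : ℕ | 0 < d ∧ (d : ℤ) ∈ T} := by
        refine ⟨Int.natAbs_pos.mpr hg0, (hgmem _).mpr ?_⟩
        exact Int.dvd_natAbs.mpr dvd_rfl
      refine le_antisymm (Nat.sInf_le hmemset) ?_
      obtain ⟨hpos, hT⟩ := Nat.sInf_mem ⟨g.natAbs, hmemset⟩
      have hdvd : g ∣ ((sInf {d : ℕ | 0 < d ∧ (d : ℤ) ∈ T} : ℕ) : ℤ) := (hgmem _).mp hT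
      have := Int.le_of_dvd (by exact_mod_cast hpos) (Int.natAbs_dvd.mpr hdvd)
      exact_mod_cast this
  refine ⟨?_, ?_, ?_⟩
  · intro n hn ⟨f, hf, hfp⟩
    have hnT : n ∈ T := hST n ⟨f, hf, hfp⟩
    rw [hlp]
    exact Int.natAbs_dvd.mpr ((hgmem _).mp hnT)
  · intro c hc
    have hgT : g ∈ T := (hgmem g).mpr dvd_rfl
    obtain ⟨m, hm, k, hk, rfl⟩ := hgT
    have hcS : ∀ n ∈ S, (c : ℤ) ∣ n := by
      intro n hn
      rcases eq_or_ne n 0 with rfl | hn0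
      · exact dvd_zero _
      · exact hc n hn0 hn
    have : (c : ℤ) ∣ m - k := dvd_sub (hcS m hm) (hcS k hk)
    rw [hlp]
    exact Int.ofNat_dvd.mp (Int.dvd_natAbs.mpr this)
  · have hclT : AddSubgroup.closure S = T := by
      refine le_antisymm ((AddSubgroup.closure_le _).mpr fun n hn => hST n hn) ?_
      rintro x ⟨m, hm, k, hk, rfl⟩
      exact sub_mem (AddSubgroup.subset_closure hm) (AddSubgroup.subset_closure hk)
    rw [hclT, hlp]
    ext x
    rw [hgmem, Int.mem_zmultiples_iff, Int.natAbs_dvd]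
end

section
/- Let A be a commutative ring equipped with a ℤ-grading 𝒜 (GradedRing 𝒜) and let p be a homogeneous prime ideal of A. Then: (a) per_p(A) ≠ 0 if and only if there exist an integer n ≠ 0 and an element f ∈ 𝒜 n with f ∉ p; and (b) for every integer n ≠ 0 and every f ∈ 𝒜 n with f ∉ p, the integer per_p(A) is nonzero and divides n. -/
/-!
The degrees `m - k` of fractions `a / s` of homogeneous elements outside the prime `p` form an
additive subgroup of `ℤ`, because a product of elements outside `p` stays outside `p`. The local
period is the least positive element of this subgroup, hence its nonnegative generator. A
homogeneous `f ∉ p` of degree `n` gives the fraction `f / 1` of degree `n`, so `n` lies in the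
subgroup and is a multiple of the period.
-/

open AddSubgroup

theorem Int.eq_zmultiples_sInf_pos (H : AddSubgroup ℤ) :
    H = zmultiples ((sInf {d : ℕ | 0 < d ∧ (d : ℤ) ∈ H} : ℕ) : ℤ) := by
  set S := {d : ℕ | 0 < d ∧ (d : ℤ) ∈ H}
  rcases S.eq_empty_or_nonempty with hS | hS
  · rw [hS, Nat.sInf_empty, Nat.cast_zero, zmultiples_zero_eq_bot, eq_bot_iff]
    intro n hn
    by_contra hn0
    have hnatAbs : (n.natAbs : ℤ) ∈ H := by
      rcases Int.natAbs_eq n with h | h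
      · rwa [h] at hn
      · rwa [h, neg_mem_iff] at hn
    exact hS.subset ⟨Int.natAbs_pos.2 hn0, hnatAbs⟩
  · obtain ⟨hpos, hmem⟩ := Nat.sInf_mem hS
    rw [zmultiples_eq_closure]
    apply cyclic_of_min
    refine ⟨⟨hmem, Int.natCast_pos.2 hpos⟩, ?_⟩
    rintro g ⟨hg, hgpos⟩
    lift g to ℕ using hgpos.le
    exact_mod_cast Nat.sInf_le (show g ∈ S from ⟨Int.natCast_pos.1 hgpos, hg⟩)

namespace GradedRing

variable {A : Type*} [CommRing A] (𝒜 : ℤ → Submodule ℤ A) [SetLike.GradedMonoid 𝒜]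
  (p : Ideal A) [hp : p.IsPrime]

def degreeDifferences : AddSubgroup ℤ where
  carrier := {n | ∃ m k : ℤ, ∃ a ∈ 𝒜 m, ∃ s ∈ 𝒜 k, a ∉ p ∧ s ∉ p ∧ m - k = n}
  zero_mem' := ⟨0, 0, 1, SetLike.GradedOne.one_mem, 1, SetLike.GradedOne.one_mem,
    hp.one_notMem, hp.one_notMem, sub_zero 0⟩
  add_mem' := by
    rintro _ _ ⟨m₁, k₁, a₁, ha₁, s₁, hs₁, ha₁p, hs₁p, rfl⟩
      ⟨m₂, k₂, a₂, ha₂, s₂, hs₂, ha₂p, hs₂p, rfl⟩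
    exact ⟨m₁ + m₂, k₁ + k₂, a₁ * a₂, SetLike.mul_mem_graded ha₁ ha₂,
      s₁ * s₂, SetLike.mul_mem_graded hs₁ hs₂, hp.mul_notMem ha₁p ha₂p,
      hp.mul_notMem hs₁p hs₂p, by ring⟩
  neg_mem' := by
    rintro _ ⟨m, k, a, ha, s, hs, hap, hsp, rfl⟩
    exact ⟨k, m, s, hs, a, ha, hsp, hap, by ring⟩

variable {𝒜 p}

theorem mem_degreeDifferences_of_mem {n : ℤ} {f : A} (hf : f ∈ 𝒜 n) (hfp : f ∉ p) :
    n ∈ degreeDifferences 𝒜 p :=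
  ⟨n, 0, f, hf, 1, SetLike.GradedOne.one_mem, hfp, hp.one_notMem, sub_zero n⟩

theorem exists_ne_zero_mem_degreeDifferences_iff :
    (∃ n ∈ degreeDifferences 𝒜 p, n ≠ 0) ↔ ∃ n : ℤ, n ≠ 0 ∧ ∃ f ∈ 𝒜 n, f ∉ p := by
  constructor
  · rintro ⟨_, ⟨m, k, a, ha, s, hs, hap, hsp, rfl⟩, hmk⟩
    by_cases hm : m = 0
    · exact ⟨k, by omega, s, hs, hsp⟩
    · exact ⟨m, hm, a, ha, hap⟩
  · rintro ⟨n, hn, f, hf, hfp⟩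
    exact ⟨n, mem_degreeDifferences_of_mem hf hfp, hn⟩

variable (𝒜 p)

theorem degreeDifferences_eq_zmultiples_localPeriod :
    degreeDifferences 𝒜 p = zmultiples (localPeriod 𝒜 p : ℤ) :=
  Int.eq_zmultiples_sInf_pos _

variable {𝒜 p}

theorem localPeriod_dvd_of_mem {n : ℤ} {f : A} (hf : f ∈ 𝒜 n) (hfp : f ∉ p) :
    (localPeriod 𝒜 p : ℤ) ∣ n := by
  rw [← Int.mem_zmultiples_iff, ← degreeDifferences_eq_zmultiples_localPeriod]
  exact mem_degreeDifferences_of_mem hf hfp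

theorem localPeriod_ne_zero_iff :
    localPeriod 𝒜 p ≠ 0 ↔ ∃ n : ℤ, n ≠ 0 ∧ ∃ f ∈ 𝒜 n, f ∉ p := by
  rw [← exists_ne_zero_mem_degreeDifferences_iff, degreeDifferences_eq_zmultiples_localPeriod]
  constructor
  · intro h
    exact ⟨localPeriod 𝒜 p, mem_zmultiples _, by exact_mod_cast h⟩
  · rintro ⟨n, hn, hn0⟩ h
    rw [h, Nat.cast_zero, zmultiples_zero_eq_bot, mem_bot] at hn
    exact hn0 hn

end GradedRing

open GradedRing in
theorem periodic_locus_basic_opens_general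
    (A : Type*) [CommRing A] (𝒜 : ℤ → Submodule ℤ A) [GradedRing 𝒜]
    (p : Ideal A) (hp : p.IsPrime) :
    (localPeriod 𝒜 p ≠ 0 ↔ ∃ n : ℤ, n ≠ 0 ∧ ∃ f ∈ 𝒜 n, f ∉ p) ∧
    (∀ n : ℤ, n ≠ 0 → ∀ f ∈ 𝒜 n, f ∉ p →
      localPeriod 𝒜 p ≠ 0 ∧ (localPeriod 𝒜 p : ℤ) ∣ n) :=
  ⟨localPeriod_ne_zero_iff, fun n hn f hf hfp =>
    ⟨localPeriod_ne_zero_iff.2 ⟨n, hn, f, hf, hfp⟩, localPeriod_dvd_of_mem hf hfp⟩⟩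

/-- Corollary 2.14, `sta:graded-ring-periodic-locus`.  For a homogeneous
prime `p`: (a) the local period at `p` is nonzero iff some homogeneous element of
nonzero degree lies outside `p`; (b) for every `f ∈ 𝒜 n` with `n ≠ 0` and `f ∉ p`,
the local period at `p` is nonzero and divides `n`. -/
theorem periodic_locus_basic_opens
    (A : Type*) [CommRing A] (𝒜 : ℤ → Submodule ℤ A) [GradedRing 𝒜]
    (p : Ideal A) (hp : p.IsPrime) (hhom : Ideal.IsHomogeneous 𝒜 p) :
    (localPeriod 𝒜 p ≠ 0 ↔ ∃ n : ℤ, n ≠ 0 ∧ ∃ f ∈ 𝒜 n, f ∉ p) ∧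
    (∀ n : ℤ, n ≠ 0 → ∀ f ∈ 𝒜 n, f ∉ p →
      localPeriod 𝒜 p ≠ 0 ∧ (localPeriod 𝒜 p : ℤ) ∣ n) :=
  periodic_locus_basic_opens_general A 𝒜 p hp
end

section
/- Let A be a commutative ring equipped with a ℤ-grading 𝒜 (GradedRing 𝒜), and let T be a set of homogeneous elements of A (each f ∈ T lies in 𝒜 n for some n) whose images in the quotient A / nilradical(A) generate it as an algebra over the image of the subring 𝒜 0. Then for every homogeneous prime ideal p of A: per_p(A) ≠ 0 if and only if there exist f ∈ T and an integer n ≠ 0 such that f ∈ 𝒜 n and f ∉ p. -/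
/-- refinement in Corollary 2.14.  Let `T` be a set of homogeneous
elements of `A` whose images in `A / nilradical A`, together with the image of the
degree-zero subring `𝒜 0`, generate `A / nilradical A` as a ring (i.e. generate it as
an algebra over the image of `𝒜 0`).  Then a homogeneous prime `p` has nonzero local
period iff some `f ∈ T` of nonzero degree lies outside `p`. -/
theorem periodic_locus_detected_by_generators
    (A : Type*) [CommRing A] (𝒜 : ℤ → Submodule ℤ A) [GradedRing 𝒜]
    (T : Set A) (hT : ∀ f ∈ T, ∃ n : ℤ, f ∈ 𝒜 n)
    (hgen : Subring.closure
      ((Ideal.Quotient.mk (nilradical A)) '' ((𝒜 0 : Set A) ∪ T)) = ⊤) :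
    ∀ p : Ideal A, p.IsPrime → Ideal.IsHomogeneous 𝒜 p →
      (localPeriod 𝒜 p ≠ 0 ↔ ∃ f ∈ T, ∃ n : ℤ, n ≠ 0 ∧ f ∈ 𝒜 n ∧ f ∉ p) := by
  intro p hp hhom
  have hone : (1 : A) ∉ p := fun h => hp.ne_top ((Ideal.eq_top_iff_one p).mpr h)
  constructor
  · intro hne
    -- the defining set is nonempty
    have hS : {d : ℕ | 0 < d ∧ ∃ m k : ℤ, ∃ a ∈ 𝒜 m, ∃ s ∈ 𝒜 k,
        a ∉ p ∧ s ∉ p ∧ m - k = (d : ℤ)}.Nonempty := by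
      by_contra h
      rw [Set.not_nonempty_iff_eq_empty] at h
      exact hne (by simp [localPeriod, h])
    obtain ⟨d, hd, m, k, a, ha, s, hs, hap, hsp, hmk⟩ := hS
    -- obtain a homogeneous element of nonzero degree outside p
    have hx : ∃ n : ℤ, n ≠ 0 ∧ ∃ x ∈ 𝒜 n, x ∉ p := by
      by_cases hm : m = 0
      · exact ⟨k, by omega, s, hs, hsp⟩
      · exact ⟨m, hm, a, ha, hap⟩
    obtain ⟨n, hn, x, hxn, hxp⟩ := hx
    by_contra hcon
    push_neg at hcon
    -- the subring 𝒜 0 + p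
    let C : Subring A :=
      { carrier := {a | ∃ u ∈ 𝒜 0, a - u ∈ p}
        one_mem' := ⟨1, SetLike.one_mem_graded 𝒜, by simp⟩
        zero_mem' := ⟨0, zero_mem _, by simp⟩
        add_mem' := by
          rintro y z ⟨u, hu, hyu⟩ ⟨v, hv, hzv⟩
          refine ⟨u + v, add_mem hu hv, ?_⟩
          have : y + z - (u + v) = (y - u) + (z - v) := by ring
          rw [this]; exact add_mem hyu hzv
        neg_mem' := by
          rintro y ⟨u, hu, hyu⟩
          refine ⟨-u, neg_mem hu, ?_⟩
          have : -y - -u = -(y - u) := by ring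
          rw [this]; exact neg_mem hyu
        mul_mem' := by
          rintro y z ⟨u, hu, hyu⟩ ⟨v, hv, hzv⟩
          refine ⟨u * v, by simpa using SetLike.mul_mem_graded hu hv, ?_⟩
          have : y * z - u * v = (y - u) * z + u * (z - v) := by ring
          rw [this]
          exact add_mem (p.mul_mem_right _ hyu) (p.mul_mem_left _ hzv) }
    have hsub : ((𝒜 0 : Set A) ∪ T) ⊆ (C : Set A) := by
      rintro f (hf | hf)
      · exact ⟨f, hf, by simp⟩
      · obtain ⟨j, hj⟩ := hT f hf
        by_cases hj0 : j = 0
        · exact ⟨f, hj0 ▸ hj, by simp⟩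
        · exact ⟨0, zero_mem _, by simpa using hcon f hf j hj0 hj⟩
    have hle : Subring.closure ((𝒜 0 : Set A) ∪ T) ≤ C := Subring.closure_le.mpr hsub
    -- map to the quotient
    have hmap : (Subring.closure ((𝒜 0 : Set A) ∪ T)).map
        (Ideal.Quotient.mk (nilradical A)) = ⊤ := by
      rw [RingHom.map_closure]; exact hgen
    have hxC : Ideal.Quotient.mk (nilradical A) x ∈
        C.map (Ideal.Quotient.mk (nilradical A)) := by
      have h1 : (Subring.closure ((𝒜 0 : Set A) ∪ T)).map (Ideal.Quotient.mk (nilradical A))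
          ≤ C.map (Ideal.Quotient.mk (nilradical A)) := (Subring.gc_map_comap _).monotone_l hle
      rw [hmap] at h1
      exact h1 (Subring.mem_top _)
    obtain ⟨c, hc, hcx⟩ := hxC
    obtain ⟨u, hu, hcu⟩ := hc
    have hcxnil : c - x ∈ p := nilradical_le_prime p (Ideal.Quotient.eq.mp hcx)
    have hxu : x - u ∈ p := by
      have h2 : x - u = -(c - x) + (c - u) := by ring
      rw [h2]; exact add_mem (neg_mem hcxnil) hcu
    have hdec := hhom n hxu
    have h3 : (DirectSum.decompose 𝒜 (x - u) n : A) = x := by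
      rw [DirectSum.decompose_sub]
      simp [DirectSum.decompose_of_mem_same 𝒜 hxn,
        DirectSum.decompose_of_mem_ne 𝒜 hu (Ne.symm hn)]
    exact hxp (h3 ▸ hdec)
  · rintro ⟨f, hf, n, hn, hfn, hfp⟩
    have hSne : {d : ℕ | 0 < d ∧ ∃ m k : ℤ, ∃ a ∈ 𝒜 m, ∃ s ∈ 𝒜 k,
        a ∉ p ∧ s ∉ p ∧ m - k = (d : ℤ)}.Nonempty := by
      rcases lt_or_gt_of_ne hn with hneg | hpos
      · exact ⟨(-n).toNat, by omega, 0, n, 1, SetLike.one_mem_graded 𝒜, f, hfn,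
          hone, hfp, by omega⟩
      · exact ⟨n.toNat, by omega, n, 0, f, hfn, 1, SetLike.one_mem_graded 𝒜,
          hfp, hone, by omega⟩
    exact (Nat.sInf_mem hSne).1.ne'
end

section
/- Let A be a commutative ring equipped with a ℤ-grading 𝒜 (GradedRing 𝒜), let d > 0 be an integer, and let p be a homogeneous prime ideal of A with per_p(A) dividing d (note per_p(A) ≠ 0 since d > 0). Then there exist an integer m and an element g ∈ 𝒜 m with g ∉ p such that every homogeneous prime ideal q of A with g ∉ q satisfies per_q(A) divides d. Consequently, the d-periodic locus Per_d(A) = {p homogeneous prime : per_p(A) ∣ d} is open in the homogeneous Zariski spectrum (it is a union of basic opens D(g)). -/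
/-- Auxiliary: the period set. -/
def perSet {A : Type*} [CommRing A] (𝒜 : ℤ → Submodule ℤ A) (q : Ideal A) : Set ℕ :=
  {d : ℕ | 0 < d ∧ ∃ m k : ℤ, ∃ a ∈ 𝒜 m, ∃ s ∈ 𝒜 k,
    a ∉ q ∧ s ∉ q ∧ m - k = (d : ℤ)}

lemma localPeriod_eq_sInf_perSet {A : Type*} [CommRing A] (𝒜 : ℤ → Submodule ℤ A)
    (q : Ideal A) : localPeriod 𝒜 q = sInf (perSet 𝒜 q) := rfl

lemma localPeriod_dvd_of_mem {A : Type*} [CommRing A] (𝒜 : ℤ → Submodule ℤ A)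
    [GradedRing 𝒜] (q : Ideal A) (hq : q.IsPrime)
    {x : ℕ} (hx : x ∈ perSet 𝒜 q) : localPeriod 𝒜 q ∣ x := by
  set n := localPeriod 𝒜 q with hn
  have hne : (perSet 𝒜 q).Nonempty := ⟨x, hx⟩
  have hmem : n ∈ perSet 𝒜 q := Nat.sInf_mem hne
  have hnpos : 0 < n := hmem.1
  obtain ⟨mn, kn, an, han, sn, hsn, hanq, hsnq, hdn⟩ := hmem.2
  obtain ⟨hxpos, mx, kx, ax, hax, sx, hsx, haxq, hsxq, hdx⟩ := hx
  set t : ℕ := x / n with ht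
  set r : ℕ := x % n with hr
  have hdiv : n * t + r = x := Nat.div_add_mod x n
  rcases Nat.eq_zero_or_pos r with h0 | hrpos
  · exact ⟨t, by omega⟩
  · exfalso
    have hrmem : r ∈ perSet 𝒜 q := by
      refine ⟨hrpos, mx + (t : ℤ) * kn, kx + (t : ℤ) * mn, ax * sn ^ t, ?_, sx * an ^ t, ?_, ?_, ?_, ?_⟩
      · exact SetLike.mul_mem_graded hax
          (by simpa [nsmul_eq_mul] using SetLike.pow_mem_graded t hsn)
      · exact SetLike.mul_mem_graded hsx
          (by simpa [nsmul_eq_mul] using SetLike.pow_mem_graded t han)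
      · intro h
        rcases hq.mem_or_mem h with h | h
        · exact haxq h
        · exact hsnq (hq.mem_of_pow_mem t h)
      · intro h
        rcases hq.mem_or_mem h with h | h
        · exact hsxq h
        · exact hanq (hq.mem_of_pow_mem t h)
      · have h1 : (n : ℤ) * t + r = x := by exact_mod_cast hdiv
        have h2 : (t : ℤ) * (mn - kn) = t * n := by rw [hdn]
        linarith [hdx]
    have hle := Nat.sInf_le hrmem
    rw [← localPeriod_eq_sInf_perSet, ← hn] at hle
    have hrlt : r < n := Nat.mod_lt x hnpos
    omega

/-- openness of the `d`-periodic locus, Remark 2.11(1).  If `d > 0` and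
the local period at a homogeneous prime `p` divides `d`, then there is a homogeneous
element `g ∉ p` such that every homogeneous prime `q` avoiding `g` also has local
period dividing `d`; hence `Per_d(A)` is a union of basic opens `D(g)` and is open. -/
theorem periodic_locus_isOpen
    (A : Type*) [CommRing A] (𝒜 : ℤ → Submodule ℤ A) [GradedRing 𝒜]
    (d : ℕ) (hd : 0 < d)
    (p : Ideal A) (hp : p.IsPrime) (hphom : Ideal.IsHomogeneous 𝒜 p)
    (hper : localPeriod 𝒜 p ∣ d) :
    ∃ m : ℤ, ∃ g ∈ 𝒜 m, g ∉ p ∧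
      ∀ q : Ideal A, q.IsPrime → Ideal.IsHomogeneous 𝒜 q → g ∉ q →
        localPeriod 𝒜 q ∣ d := by
  set e := localPeriod 𝒜 p with he
  have hene : e ≠ 0 := by
    rintro h; rw [h] at hper; exact hd.ne' (Nat.eq_zero_of_zero_dvd hper)
  have hne : (perSet 𝒜 p).Nonempty := by
    by_contra h
    rw [Set.not_nonempty_iff_eq_empty] at h
    exact hene (by simp [he, localPeriod_eq_sInf_perSet, h])
  have hmem : e ∈ perSet 𝒜 p := Nat.sInf_mem hne
  obtain ⟨hepos, m, k, a, ha, s, hs, hap, hsp, hdm⟩ := hmem.imp id id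
  refine ⟨m + k, a * s, SetLike.mul_mem_graded ha hs, ?_, ?_⟩
  · intro h
    rcases hp.mem_or_mem h with h | h
    · exact hap h
    · exact hsp h
  · intro q hq _ hgq
    have haq : a ∉ q := fun h => hgq (Ideal.mul_mem_right _ _ h)
    have hsq : s ∉ q := fun h => hgq (Ideal.mul_mem_left _ _ h)
    obtain ⟨t, hdt⟩ := hper
    have htpos : 0 < t := by
      rcases Nat.eq_zero_or_pos t with h0 | h
      · subst h0; simp at hdt; omega
      · exact h
    apply localPeriod_dvd_of_mem 𝒜 q hq
    refine ⟨hd, (t : ℤ) * m, (t : ℤ) * k, a ^ t,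
      (by simpa [nsmul_eq_mul] using SetLike.pow_mem_graded t ha),
      s ^ t, (by simpa [nsmul_eq_mul] using SetLike.pow_mem_graded t hs),
      fun h => haq (hq.mem_of_pow_mem t h),
      fun h => hsq (hq.mem_of_pow_mem t h), ?_⟩
    have h1 : (d : ℤ) = e * t := by exact_mod_cast hdt
    have h2 : (t : ℤ) * (m - k) = t * e := by rw [hdm]
    linarith
end

section
/- Let A be a commutative ring equipped with a ℤ-grading 𝒜 (GradedRing 𝒜), and let d > 0 be an integer such that for every integer n the product of submodules satisfies 𝒜 n * 𝒜 d = 𝒜 (n + d) (this holds in particular when A is weakly d-periodic, i.e. when multiplication induces isomorphisms 𝒜 n ⊗_{𝒜 0} 𝒜 d ≅ 𝒜 (n+d) for all n). Then every homogeneous prime ideal p of A satisfies: per_p(A) ≠ 0 and per_p(A) divides d. In other words, Per(A) = Per_d(A) is the whole homogeneous spectrum. -/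
/-- Example 2.12: weakly `d`-periodic rings.  If `d > 0` and
`𝒜 n * 𝒜 d = 𝒜 (n + d)` for every `n : ℤ`, then every homogeneous prime of `A`
has nonzero local period dividing `d`; i.e. `Per(A) = Per_d(A)` is the whole
homogeneous spectrum. -/
theorem weakly_periodic_localPeriod_dvd
    (A : Type*) [CommRing A] (𝒜 : ℤ → Submodule ℤ A) [GradedRing 𝒜]
    (d : ℕ) (hd : 0 < d)
    (hweak : ∀ n : ℤ, 𝒜 n * 𝒜 (d : ℤ) = 𝒜 (n + d)) :
    ∀ p : Ideal A, p.IsPrime → Ideal.IsHomogeneous 𝒜 p →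
      localPeriod 𝒜 p ≠ 0 ∧ localPeriod 𝒜 p ∣ d := by
  intro p hp _
  have h1p : (1 : A) ∉ p := fun h => hp.ne_top ((Ideal.eq_top_iff_one p).mpr h)
  -- The set of degree differences is an additive subgroup of ℤ.
  set D : AddSubgroup ℤ :=
    { carrier := {n | ∃ m k : ℤ, ∃ a ∈ 𝒜 m, ∃ s ∈ 𝒜 k, a ∉ p ∧ s ∉ p ∧ m - k = n}
      zero_mem' := ⟨0, 0, 1, SetLike.one_mem_graded 𝒜, 1, SetLike.one_mem_graded 𝒜,
        h1p, h1p, by ring⟩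
      add_mem' := by
        rintro x y ⟨m1, k1, a1, ha1, s1, hs1, ha1p, hs1p, h1⟩
          ⟨m2, k2, a2, ha2, s2, hs2, ha2p, hs2p, h2⟩
        exact ⟨m1 + m2, k1 + k2, a1 * a2, SetLike.mul_mem_graded ha1 ha2,
          s1 * s2, SetLike.mul_mem_graded hs1 hs2,
          fun h => (hp.mem_or_mem h).elim ha1p ha2p,
          fun h => (hp.mem_or_mem h).elim hs1p hs2p, by omega⟩
      neg_mem' := by
        rintro x ⟨m, k, a, ha, s, hs, hap, hsp, h⟩
        exact ⟨k, m, s, hs, a, ha, hsp, hap, by omega⟩ } with hD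
  -- There is a homogeneous element of degree d outside p.
  have h1mem : (1 : A) ∈ 𝒜 (-(d : ℤ)) * 𝒜 (d : ℤ) := by
    rw [hweak]
    have : (-(d : ℤ) + d) = 0 := by ring
    rw [this]
    exact SetLike.one_mem_graded 𝒜
  have hex : ∃ y ∈ 𝒜 (d : ℤ), y ∉ p := by
    by_contra hc
    push_neg at hc
    have : (1 : A) ∈ p := by
      refine Submodule.mul_induction_on h1mem (fun x hx y hy => ?_)
        (fun x y hx hy => p.add_mem hx hy)
      exact Ideal.mul_mem_left p x (hc y hy)
    exact h1p this
  obtain ⟨y, hy, hyp⟩ := hex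
  have hdD : (d : ℤ) ∈ D :=
    ⟨(d : ℤ), 0, y, hy, 1, SetLike.one_mem_graded 𝒜, hyp, h1p, by ring⟩
  -- Membership in the defining set of localPeriod.
  set S : Set ℕ := {n : ℕ | 0 < n ∧ ∃ m k : ℤ, ∃ a ∈ 𝒜 m, ∃ s ∈ 𝒜 k,
    a ∉ p ∧ s ∉ p ∧ m - k = (n : ℤ)} with hS
  have hSiff : ∀ n : ℕ, n ∈ S ↔ 0 < n ∧ (n : ℤ) ∈ D := fun n => Iff.rfl
  have hdS : d ∈ S := (hSiff d).mpr ⟨hd, hdD⟩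
  have hLP : localPeriod 𝒜 p = sInf S := rfl
  have heS : sInf S ∈ S := Nat.sInf_mem ⟨d, hdS⟩
  obtain ⟨hepos, heD⟩ := (hSiff _).mp heS
  set e := sInf S with he
  constructor
  · rw [hLP]; omega
  · rw [hLP]
    -- Euclidean argument: d % e must be 0.
    have hrD : ((d % e : ℕ) : ℤ) ∈ D := by
      have hmul : ((d / e : ℕ) : ℤ) • (e : ℤ) ∈ D := D.zsmul_mem heD _
      have := D.sub_mem hdD hmul
      have hcast : ((d % e : ℕ) : ℤ) = (d : ℤ) - ((d / e : ℕ) : ℤ) • (e : ℤ) := by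
        have h' : ((d % e : ℕ) : ℤ) + (e : ℤ) * ((d / e : ℕ) : ℤ) = (d : ℤ) := by
          exact_mod_cast Nat.mod_add_div d e
        rw [smul_eq_mul, mul_comm]
        linarith
      rwa [hcast]
    by_contra hnd
    have hrne : d % e ≠ 0 := fun h => hnd (Nat.dvd_of_mod_eq_zero h)
    have hrS : d % e ∈ S := (hSiff _).mpr ⟨Nat.pos_of_ne_zero hrne, hrD⟩
    have hle : e ≤ d % e := Nat.sInf_le hrS
    have hlt : d % e < e := Nat.mod_lt d hepos
    omega
end

section
/- Let A be a commutative ring equipped with a ℤ-grading 𝒜 (GradedRing 𝒜), and let p ⊆ q be homogeneous prime ideals of A. Then per_p(A) divides per_q(A). In other words, the local period is monotone under specialization of homogeneous primes (the graded analogue of the fact that the period map to (ℤ≥0, ∣) is order-preserving). -/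
/-- graded form of Proposition 4.8(2), `sta:period-map`.  For
homogeneous primes `p ⊆ q` of the `ℤ`-graded commutative ring `A`, the local period at
`p` divides the local period at `q`: the period is monotone under specialization. -/
theorem localPeriod_dvd_of_le
    (A : Type*) [CommRing A] (𝒜 : ℤ → Submodule ℤ A) [GradedRing 𝒜]
    (p q : Ideal A) (hp : p.IsPrime) (hphom : Ideal.IsHomogeneous 𝒜 p)
    (hq : q.IsPrime) (hqhom : Ideal.IsHomogeneous 𝒜 q) (hpq : p ≤ q) :
    localPeriod 𝒜 p ∣ localPeriod 𝒜 q := by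
  classical
  set Pc : Set ℤ :=
    {z : ℤ | ∃ m k : ℤ, ∃ a ∈ 𝒜 m, ∃ s ∈ 𝒜 k, a ∉ p ∧ s ∉ p ∧ m - k = z} with hPc
  have hone : (1 : A) ∉ p := fun h => hp.ne_top ((Ideal.eq_top_iff_one p).mpr h)
  have h0 : (0 : ℤ) ∈ Pc :=
    ⟨0, 0, 1, SetLike.one_mem_graded 𝒜, 1, SetLike.one_mem_graded 𝒜, hone, hone, by ring⟩
  have hadd : ∀ x y : ℤ, x ∈ Pc → y ∈ Pc → x + y ∈ Pc := by
    rintro x y ⟨m, k, a, ham, s, hsk, hap, hsp, rfl⟩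
      ⟨m', k', a', ham', s', hsk', hap', hsp', rfl⟩
    refine ⟨m + m', k + k', a * a', SetLike.mul_mem_graded ham ham',
      s * s', SetLike.mul_mem_graded hsk hsk', ?_, ?_, by ring⟩
    · exact fun h => (hp.mem_or_mem h).elim hap hap'
    · exact fun h => (hp.mem_or_mem h).elim hsp hsp'
  have hneg : ∀ x : ℤ, x ∈ Pc → -x ∈ Pc := by
    rintro x ⟨m, k, a, ham, s, hsk, hap, hsp, rfl⟩
    exact ⟨k, m, s, hsk, a, ham, hsp, hap, by ring⟩
  let P : AddSubgroup ℤ :=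
    { carrier := Pc
      zero_mem' := h0
      add_mem' := fun hx hy => hadd _ _ hx hy
      neg_mem' := fun hx => hneg _ hx }
  obtain ⟨g, hg⟩ := Int.subgroup_cyclic P
  have hmem : ∀ z : ℤ, z ∈ Pc ↔ g ∣ z := by
    intro z
    have : z ∈ P ↔ z ∈ AddSubgroup.closure ({g} : Set ℤ) := by rw [← hg]
    rw [show (z ∈ Pc) = (z ∈ P) from rfl, this, AddSubgroup.mem_closure_singleton]
    constructor
    · rintro ⟨n, rfl⟩; exact ⟨n, by rw [smul_eq_mul, mul_comm]⟩
    · rintro ⟨n, rfl⟩; exact ⟨n, by rw [smul_eq_mul, mul_comm]⟩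
  -- the defining sets of the local periods
  set Sp : Set ℕ := {d : ℕ | 0 < d ∧ ∃ m k : ℤ, ∃ a ∈ 𝒜 m, ∃ s ∈ 𝒜 k,
    a ∉ p ∧ s ∉ p ∧ m - k = (d : ℤ)} with hSp
  set Sq : Set ℕ := {d : ℕ | 0 < d ∧ ∃ m k : ℤ, ∃ a ∈ 𝒜 m, ∃ s ∈ 𝒜 k,
    a ∉ q ∧ s ∉ q ∧ m - k = (d : ℤ)} with hSq
  have hSqp : Sq ⊆ Sp := by
    rintro d ⟨hd, m, k, a, ham, s, hsk, haq, hsq, h⟩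
    exact ⟨hd, m, k, a, ham, s, hsk, fun h' => haq (hpq h'), fun h' => hsq (hpq h'), h⟩
  rcases Nat.eq_zero_or_pos (localPeriod 𝒜 q) with h | hqpos
  · rw [h]; exact dvd_zero _
  · have hqne : Sq.Nonempty := by
      by_contra hempty
      rw [Set.not_nonempty_iff_eq_empty] at hempty
      have : localPeriod 𝒜 q = 0 := by
        unfold localPeriod
        rw [← hSq, hempty, Nat.sInf_empty]
      omega
    have hqmem : localPeriod 𝒜 q ∈ Sq := Nat.sInf_mem hqne
    have hqmemp : localPeriod 𝒜 q ∈ Sp := hSqp hqmem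
    have hpne : Sp.Nonempty := ⟨_, hqmemp⟩
    have hpmem : localPeriod 𝒜 p ∈ Sp := Nat.sInf_mem hpne
    have hppos : 0 < localPeriod 𝒜 p := hpmem.1
    have hgq : g ∣ (localPeriod 𝒜 q : ℤ) := (hmem _).mp hqmemp.2
    have hgp : g ∣ (localPeriod 𝒜 p : ℤ) := (hmem _).mp hpmem.2
    have hgne : g ≠ 0 := by
      rintro rfl
      rw [zero_dvd_iff] at hgp
      omega
    -- `|g|` belongs to `Sp`
    have hgP : (g.natAbs : ℤ) ∈ Pc := by
      rw [hmem]
      exact Int.dvd_natAbs.mpr dvd_rfl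
    have hgSp : g.natAbs ∈ Sp := by
      refine ⟨Int.natAbs_pos.mpr hgne, ?_⟩
      obtain ⟨m, k, a, ham, s, hsk, hap, hsp, h⟩ := hgP
      exact ⟨m, k, a, ham, s, hsk, hap, hsp, h⟩
    have hle : localPeriod 𝒜 p ≤ g.natAbs := Nat.sInf_le hgSp
    have hdvd : g.natAbs ∣ localPeriod 𝒜 p := by
      have := Int.natAbs_dvd_natAbs.mpr hgp
      simpa using this
    have heq : localPeriod 𝒜 p = g.natAbs :=
      le_antisymm hle (Nat.le_of_dvd hppos hdvd)
    rw [heq]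
    have := Int.natAbs_dvd_natAbs.mpr hgq
    simpa using this
end

section
/- Let C be a pretriangulated category (with shift by ℤ) equipped with a t-structure t. Assume t is non-degenerate: every object X of C such that X lies in C^{≤ n} (i.e. t.LE n X holds) for all integers n is a zero object, and every object X such that X lies in C^{≥ n} (i.e. t.GE n X holds) for all integers n is a zero object. If there exists an integer d > 0 such that for every object X of C the shift X⟦d⟧ is isomorphic to X, then every object of C is a zero object. (Equivalently: a nonzero d-periodic triangulated category admits no non-degenerate t-structure.) -/
open CategoryTheory CategoryTheory.Limits CategoryTheory.Triangulated

/-!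
The integers `a` with `X⟦a⟧ ≅ X` form a subgroup of `ℤ`, and translating by such an `a` preserves
the conditions `t.le n X` and `t.ge n X` up to the index shift `n ↦ n - a`. When this subgroup
contains some `d > 0`, an object lying in one `C^{≤ n}` therefore lies in all of them, and
likewise for `C^{≥ n}`. In the truncation triangle `A → X → B → A⟦1⟧` with `A ∈ C^{≤ 0}` and
`B ∈ C^{≥ 1}`, non-degeneracy then makes `A` and `B` zero, hence `X` is zero.
-/

namespace CategoryTheory

variable {C : Type*} [Category C] {A : Type*} [AddGroup A] [HasShift C A]

def shiftPeriods (X : C) : AddSubgroup A where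
  carrier := {a | Nonempty (X⟦a⟧ ≅ X)}
  zero_mem' := ⟨(shiftFunctorZero C A).app X⟩
  add_mem' {a b} := fun ⟨e⟩ ⟨f⟩ =>
    ⟨(shiftFunctorAdd C a b).app X ≪≫ (shiftFunctor C b).mapIso e ≪≫ f⟩
  neg_mem' {a} := fun ⟨e⟩ =>
    ⟨(shiftFunctor C (-a)).mapIso e.symm ≪≫
      (shiftFunctorCompIsoId C a (-a) (add_neg_cancel a)).app X⟩

end CategoryTheory

namespace CategoryTheory.Triangulated.TStructure

variable {C : Type*} [Category C] [Preadditive C] [HasZeroObject C] [HasShift C ℤ]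
  [∀ n : ℤ, (shiftFunctor C n).Additive] [Pretriangulated C] (t : TStructure C)

lemma le_sub_of_mem_shiftPeriods {X : C} {n a : ℤ} (hX : t.le n X)
    (ha : a ∈ shiftPeriods X) : t.le (n - a) X :=
  (t.le (n - a)).prop_of_iso ha.some (t.le_shift n a (n - a) (by lia) X hX)

lemma ge_sub_of_mem_shiftPeriods {X : C} {n a : ℤ} (hX : t.ge n X)
    (ha : a ∈ shiftPeriods X) : t.ge (n - a) X :=
  (t.ge (n - a)).prop_of_iso ha.some (t.ge_shift n a (n - a) (by lia) X hX)

lemma le_of_le_of_mem_shiftPeriods {X : C} {d : ℤ} (hd : 0 < d) (hdX : d ∈ shiftPeriods X)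
    {n : ℤ} (hX : t.le n X) (m : ℤ) : t.le m X := by
  have hmem : |n - m| * d ∈ shiftPeriods X := by
    simpa using zsmul_mem hdX |n - m|
  have hle : n - |n - m| * d ≤ m := by
    nlinarith [le_abs_self (n - m), abs_nonneg (n - m)]
  exact t.le_monotone hle X (t.le_sub_of_mem_shiftPeriods hX hmem)

lemma ge_of_ge_of_mem_shiftPeriods {X : C} {d : ℤ} (hd : 0 < d) (hdX : d ∈ shiftPeriods X)
    {n : ℤ} (hX : t.ge n X) (m : ℤ) : t.ge m X := by
  have hmem : -(|n - m| * d) ∈ shiftPeriods X := by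
    simpa using neg_mem (zsmul_mem hdX |n - m|)
  have hle : m ≤ n - -(|n - m| * d) := by
    nlinarith [neg_abs_le (n - m), abs_nonneg (n - m)]
  exact t.ge_antitone hle X (t.ge_sub_of_mem_shiftPeriods hX hmem)

end CategoryTheory.Triangulated.TStructure

/-- Proposition 3.12(2), `Prop:wt-structures-periodic`.  Let `C` be a
pretriangulated category with a non-degenerate t-structure `t` (objects lying in all
`C^{≤ n}` are zero, and objects lying in all `C^{≥ n}` are zero).  If `C` is
`d`-periodic for some `d > 0` (every object `X` satisfies `X⟦d⟧ ≅ X`), then every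
object of `C` is zero. -/
theorem periodic_no_nondegenerate_tstructure
    (C : Type*) [Category C] [Preadditive C] [HasZeroObject C] [HasShift C ℤ]
    [∀ n : ℤ, (CategoryTheory.shiftFunctor C n).Additive] [Pretriangulated C]
    (t : TStructure C)
    (hLE : ∀ X : C, (∀ n : ℤ, t.le n X) → IsZero X)
    (hGE : ∀ X : C, (∀ n : ℤ, t.ge n X) → IsZero X)
    (d : ℤ) (hd : 0 < d) (hper : ∀ X : C, Nonempty ((X⟦d⟧) ≅ X)) :
    ∀ X : C, IsZero X := by
  intro X
  obtain ⟨A, B, hA, hB, f, g, h, hT⟩ := t.exists_triangle_zero_one X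
  have hAzero : IsZero A := hLE A (t.le_of_le_of_mem_shiftPeriods hd (hper A) hA)
  have hBzero : IsZero B := hGE B (t.ge_of_ge_of_mem_shiftPeriods hd (hper B) hB)
  exact Pretriangulated.Triangle.isZero₂_of_isZero₁₃ _ hT hAzero hBzero
end

section
/- Let C be a monoidal category, and let g be an invertible object of C: there are an object g' and isomorphisms α : g ⊗ g' ≅ 𝟙 and β : g' ⊗ g ≅ 𝟙. For an endomorphism w : g → g, define w̃ : 𝟙 → 𝟙 as the composite β.inv ≫ (g' ◁ w) ≫ β.hom (the whiskering of w by g' conjugated by β). Then for all morphisms a, b : 𝟙 → g one has: a ≫ w = b if and only if w̃ ≫ a = b. Moreover, w is an isomorphism if and only if w̃ is an isomorphism. -/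
open CategoryTheory CategoryTheory.MonoidalCategory

section MagicAux
variable {C : Type*} [Category C] [MonoidalCategory C]

/-- The endomorphism monoid of the tensor unit is commutative (Eckmann–Hilton). -/
private lemma magic_unit_end_comm (x y : 𝟙_ C ⟶ 𝟙_ C) : x ≫ y = y ≫ x := by
  have h := whisker_exchange x y
  simp [unitors_equal, unitors_inv_equal] at h
  exact h.symm

/-- An endomorphism of the unit acts the same on the left and on the right. -/
private lemma magic_star {g : C} (x : 𝟙_ C ⟶ 𝟙_ C) (f : 𝟙_ C ⟶ g) :
    x ≫ f = f ≫ (ρ_ g).inv ≫ (g ◁ x) ≫ (ρ_ g).hom := by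
  have h := whisker_exchange f x
  simp [unitors_equal, unitors_inv_equal] at h
  have h2 := congrArg (· ≫ (ρ_ g).hom) h
  simpa using h2

/-- Recover `u` from `g ◁ (g' ◁ u)` using the iso `α : g ⊗ g' ≅ 𝟙`. -/
private lemma magic_recover {g g' : C} (α : g ⊗ g' ≅ 𝟙_ C) (u : g ⟶ g) :
    u = (λ_ g).inv ≫ (α.inv ▷ g) ≫ (α_ g g' g).hom ≫ (g ◁ (g' ◁ u)) ≫
        (α_ g g' g).inv ≫ (α.hom ▷ g) ≫ (λ_ g).hom := by
  have h1 : (g ◁ (g' ◁ u)) = (α_ g g' g).inv ≫ ((g ⊗ g') ◁ u) ≫ (α_ g g' g).hom := by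
    simp
  rw [h1]
  simp only [Category.assoc, Iso.hom_inv_id_assoc, whisker_exchange_assoc,
    id_whiskerLeft, inv_hom_whiskerRight_assoc, Iso.inv_hom_id,
    Category.comp_id, Iso.inv_hom_id_assoc]

/-- Express `g ◁ (g' ◁ u)` as a conjugate of `u`. -/
private lemma magic_conj {g g' : C} (α : g ⊗ g' ≅ 𝟙_ C) (u : g ⟶ g) :
    g ◁ (g' ◁ u) = (α_ g g' g).inv ≫ (α.hom ▷ g) ≫ (λ_ g).hom ≫ u ≫ (λ_ g).inv ≫
      (α.inv ▷ g) ≫ (α_ g g' g).hom := by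
  have h1 : (g ◁ (g' ◁ u)) = (α_ g g' g).inv ≫ ((g ⊗ g') ◁ u) ≫ (α_ g g' g).hom := by
    simp
  have h2 : ((g ⊗ g') ◁ u) = (α.hom ▷ g) ≫ (λ_ g).hom ≫ u ≫ (λ_ g).inv ≫ (α.inv ▷ g) := by
    rw [← cancel_mono (α.hom ▷ g)]
    simp only [Category.assoc, inv_hom_whiskerRight, Category.comp_id,
      whisker_exchange, id_whiskerLeft]
  rw [h1, h2]
  simp only [Category.assoc]

end MagicAux

/-- Lemma A.13, `lem:magic`.  Let `g` be an invertible object of a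
monoidal category `C`, with inverse `g'` and isomorphisms `α : g ⊗ g' ≅ 𝟙` and
`β : g' ⊗ g ≅ 𝟙`.  For an endomorphism `w : g ⟶ g`, let
`w̃ := β.inv ≫ (g' ◁ w) ≫ β.hom : 𝟙 ⟶ 𝟙`.  Then for all `a b : 𝟙 ⟶ g` we have
`a ≫ w = b ↔ w̃ ≫ a = b`; moreover `w` is an isomorphism iff `w̃` is. -/
theorem magic_lemma_invertible_object
    (C : Type*) [Category C] [MonoidalCategory C]
    (g g' : C) (α : g ⊗ g' ≅ 𝟙_ C) (β : g' ⊗ g ≅ 𝟙_ C) (w : g ⟶ g) :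
    (∀ a b : 𝟙_ C ⟶ g, a ≫ w = b ↔ (β.inv ≫ (g' ◁ w) ≫ β.hom) ≫ a = b) ∧
    (IsIso w ↔ IsIso (β.inv ≫ (g' ◁ w) ≫ β.hom)) := by
  set wt : (g ⟶ g) → (𝟙_ C ⟶ 𝟙_ C) := fun u => β.inv ≫ (g' ◁ u) ≫ β.hom with hwt
  have hwhisk : ∀ u : g ⟶ g, g' ◁ u = β.hom ≫ wt u ≫ β.inv := by
    intro u; simp [hwt]
  have hinj : ∀ u v : g ⟶ g, wt u = wt v → u = v := by
    intro u v h
    have h2 : g' ◁ u = g' ◁ v := by rw [hwhisk u, hwhisk v, h]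
    rw [magic_recover α u, h2, ← magic_recover α v]
  have hmul : ∀ u v : g ⟶ g, wt (u ≫ v) = wt u ≫ wt v := by
    intro u v; simp [hwt]
  have hcomm : ∀ u v : g ⟶ g, u ≫ v = v ≫ u := by
    intro u v
    exact hinj _ _ (by rw [hmul, hmul, magic_unit_end_comm])
  -- the two halves of the conjugating isomorphism
  set φ₁ : g ⟶ g := (ρ_ g).inv ≫ (g ◁ β.inv) ≫ (α_ g g' g).inv ≫ (α.hom ▷ g) ≫ (λ_ g).hom
    with hφ₁
  set φ₂ : g ⟶ g := (λ_ g).inv ≫ (α.inv ▷ g) ≫ (α_ g g' g).hom ≫ (g ◁ β.hom) ≫ (ρ_ g).hom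
    with hφ₂
  have hφ : φ₁ ≫ φ₂ = 𝟙 g := by simp [hφ₁, hφ₂]
  have hmid : (ρ_ g).inv ≫ (g ◁ wt w) ≫ (ρ_ g).hom = w := by
    have e1 : (ρ_ g).inv ≫ (g ◁ wt w) ≫ (ρ_ g).hom = (φ₁ ≫ w) ≫ φ₂ := by
      simp only [hwt, MonoidalCategory.whiskerLeft_comp, magic_conj α w, hφ₁, hφ₂,
        Category.assoc]
    rw [e1, hcomm φ₁ w, Category.assoc, hφ, Category.comp_id]
  have hkey : ∀ a : 𝟙_ C ⟶ g, wt w ≫ a = a ≫ w := by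
    intro a
    rw [magic_star (wt w) a, hmid]
  constructor
  · intro a b
    rw [← hkey a]
  · constructor
    · intro hw
      have : IsIso (g' ◁ w) := (whiskerLeftIso g' (asIso w)).isIso_hom
      exact inferInstance
    · intro hwt'
      have h1 : IsIso (g' ◁ w) := by
        rw [hwhisk w]
        exact inferInstance
      have h2 : IsIso (g ◁ (g' ◁ w)) := (whiskerLeftIso g (asIso (g' ◁ w))).isIso_hom
      rw [magic_recover α w]
      exact inferInstance
end
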